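/- Let F be a CDF on [0,1] with F(u+d) - F(u) ≤ βd for all u and d > 0 (Lipschitz with constant β). Then for K i.i.d. samples with largest value V and second largest U, P(V - U ≤ d) ≤ 1 - (1 - βKd) F^K(1-d). -/

import Mathlib

/-!
Put a = 1 - d and p = F(a). If V - U ≤ d, then either at least two samples exceed a, or some
sample ω j is the largest, all other samples are at most a, and ω j lies in [M, M + d] where M is
the largest of the others. The first event has probability 1 - p^K - K(1 - p)p^(K-1). For the
second, integrating out ω j with the others fixed gives at most π[M, M + d] ≤ βd (the Lipschitz
CDF has no atoms), so each j contributes at most βd p^(K-1). The resulting bound falls short of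
1 - (1 - βKd)p^K by K p^(K-1)(1 - p)(1 - βd), which is nonnegative when βd ≤ 1; when βd > 1 the
claim is trivial.
-/

open MeasureTheory

/-- The largest of K real values. -/
noncomputable def largestVal {K : ℕ} (ω : Fin K → ℝ) : ℝ := ⨆ i, ω i

/-- The second largest of K real values: min over i of the max over j ≠ i. -/
noncomputable def secondLargestVal {K : ℕ} (ω : Fin K → ℝ) : ℝ :=
  ⨅ i, ⨆ j : {j : Fin K // j ≠ i}, ω (j : Fin K)

open Set Filter Topology ProbabilityTheory
open scoped ENNReal

theorem Measure.pi_le_mul_of_section_le {α : Type*} [MeasurableSpace α] {n : ℕ}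
    (μ : Measure α) [SigmaFinite μ] (j : Fin (n + 1)) {A : Set (Fin (n + 1) → α)}
    (hA : MeasurableSet A) {B : Set (Fin n → α)} (hB : MeasurableSet B) (c : ℝ≥0∞)
    (hsec : ∀ r, μ {x | j.insertNth x r ∈ A} ≤ B.indicator (fun _ => c) r) :
    Measure.pi (fun _ => μ) A ≤ c * Measure.pi (fun _ => μ) B := by
  have he := (measurePreserving_piFinSuccAbove (fun _ : Fin (n + 1) => μ) j).symm
  rw [← he.measure_preimage_equiv, Measure.prod_apply_symm (he.measurable hA),
    ← lintegral_indicator_const hB]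
  exact lintegral_mono fun r => hsec r

def atMostOneIn {ι α : Type*} (s : Set α) : Set (ι → α) :=
  {ω | ∀ i j, ω i ∈ s → ω j ∈ s → i = j}

section atMostOneIn

variable {ι α : Type*} {s : Set α}

theorem atMostOneIn_eq_union [DecidableEq ι] :
    (atMostOneIn s : Set (ι → α)) =
      univ.pi (fun _ => sᶜ) ∪ ⋃ i, univ.pi (Function.update (fun _ => sᶜ) i s) := by
  ext ω
  simp only [atMostOneIn, mem_ofPred_eq, mem_union, Set.mem_pi, mem_univ, forall_const,
    mem_iUnion]
  constructor
  · intro h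
    by_cases hex : ∃ i, ω i ∈ s
    · obtain ⟨i, hi⟩ := hex
      refine Or.inr ⟨i, fun k => ?_⟩
      rcases eq_or_ne k i with rfl | hk
      · simpa using hi
      · simpa [hk] using fun hks => hk (h k i hks hi)
    · push Not at hex
      exact Or.inl hex
  · rintro (h | ⟨i, h⟩) k l hk hl
    · exact absurd hk (h k)
    · have hone : ∀ m, ω m ∈ s → m = i := fun m hm =>
        by_contra fun hmi => by simpa [hmi, hm] using h m
      rw [hone k hk, hone l hl]

theorem measurableSet_atMostOneIn [Countable ι] [MeasurableSpace α] (hs : MeasurableSet s) :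
    MeasurableSet (atMostOneIn s : Set (ι → α)) := by
  classical
  rw [atMostOneIn_eq_union]
  refine (MeasurableSet.univ_pi fun _ => hs.compl).union (.iUnion fun i => .univ_pi fun k => ?_)
  rcases eq_or_ne k i with rfl | hk <;> simp [*, hs.compl]

theorem measure_pi_atMostOneIn [Fintype ι] [MeasurableSpace α] (μ : Measure α) [SigmaFinite μ]
    (hs : MeasurableSet s) :
    Measure.pi (fun _ : ι => μ) (atMostOneIn s) =
      μ sᶜ ^ Fintype.card ι + Fintype.card ι * (μ s * μ sᶜ ^ (Fintype.card ι - 1)) := by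
  classical
  have hmeas : ∀ i, MeasurableSet (univ.pi (Function.update (fun _ : ι => sᶜ) i s)) :=
    fun i => .univ_pi fun k => by rcases eq_or_ne k i with rfl | hk <;> simp [*, hs.compl]
  have hdisj : Disjoint (univ.pi (fun _ : ι => sᶜ))
      (⋃ i, univ.pi (Function.update (fun _ : ι => sᶜ) i s)) := by
    refine Set.disjoint_iUnion_right.2 fun i => Set.disjoint_left.2 fun ω hω hω' => ?_
    simpa using hω i (mem_univ i) (by simpa using hω' i (mem_univ i))
  have hpair : Pairwise fun i j => Disjoint (univ.pi (Function.update (fun _ : ι => sᶜ) i s))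
      (univ.pi (Function.update (fun _ : ι => sᶜ) j s)) := by
    intro i j hij
    refine Set.disjoint_left.2 fun ω hω hω' => ?_
    have hj : ω j ∉ s := by simpa [hij.symm] using hω j (mem_univ j)
    exact hj (by simpa using hω' j (mem_univ j))
  rw [atMostOneIn_eq_union, measure_union hdisj (.iUnion hmeas), measure_iUnion hpair hmeas,
    tsum_fintype]
  have hprod : ∀ i, ∏ k, μ (Function.update (fun _ : ι => sᶜ) i s k) =
      μ s * μ sᶜ ^ (Fintype.card ι - 1) := by
    intro i
    rw [Finset.prod_eq_mul_prod_sdiff_singleton_of_mem (Finset.mem_univ i), Function.update_self,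
      Finset.prod_congr rfl fun k hk => by rw [Function.update_of_ne (by simpa using hk)],
      Finset.prod_const, Finset.card_sdiff_of_subset (by simp), Finset.card_univ,
      Finset.card_singleton]
  simp [Measure.pi_pi, hprod]

theorem measureReal_pi_atMostOneIn [Fintype ι] [MeasurableSpace α] (μ : Measure α) [IsFiniteMeasure μ]
    (hs : MeasurableSet s) :
    (Measure.pi fun _ : ι => μ).real (atMostOneIn s) =
      μ.real sᶜ ^ Fintype.card ι +
        Fintype.card ι * (μ.real s * μ.real sᶜ ^ (Fintype.card ι - 1)) := by
  rw [measureReal_def, measure_pi_atMostOneIn μ hs,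
    ENNReal.toReal_add (by finiteness) (by finiteness)]
  simp [measureReal_def]

end atMostOneIn

theorem measure_Icc_le_of_cdf_sub_le (π : Measure ℝ) [IsProbabilityMeasure π] {β : ℝ}
    (hLip : ∀ u d : ℝ, 0 < d → cdf π (u + d) - cdf π u ≤ β * d) {d : ℝ} (hd : 0 ≤ d) (x : ℝ) :
    π (Icc x (x + d)) ≤ ENNReal.ofReal (β * d) := by
  have hε : ∀ ε > 0, π (Icc x (x + d)) ≤ ENNReal.ofReal (β * (d + ε)) := by
    intro ε hε
    have hstep := hLip (x - ε) (d + ε) (by positivity)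
    rw [show x - ε + (d + ε) = x + d by ring] at hstep
    calc π (Icc x (x + d)) ≤ π (Ioc (x - ε) (x + d)) :=
          measure_mono (Icc_subset_Ioc (by linarith) le_rfl)
      _ = ENNReal.ofReal (cdf π (x + d) - cdf π (x - ε)) := by
          rw [← (cdf π).measure_Ioc, measure_cdf]
      _ ≤ ENNReal.ofReal (β * (d + ε)) := ENNReal.ofReal_le_ofReal hstep
  have hlim : Tendsto (fun ε => ENNReal.ofReal (β * (d + ε))) (𝓝[>] 0)
      (𝓝 (ENNReal.ofReal (β * d))) := by
    have hcont : Continuous fun ε : ℝ => ENNReal.ofReal (β * (d + ε)) :=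
      ENNReal.continuous_ofReal.comp (by fun_prop)
    simpa using (hcont.tendsto 0).mono_left nhdsWithin_le_nhds
  exact ge_of_tendsto hlim (eventually_nhdsWithin_of_forall hε)

def smallLeadSet {n : ℕ} (j : Fin (n + 1)) (a d : ℝ) : Set (Fin (n + 1) → ℝ) :=
  {ω | j.removeNth ω ∈ univ.pi (fun _ => Iic a) ∧
    ω j ∈ Icc (⨆ l, j.removeNth ω l) ((⨆ l, j.removeNth ω l) + d)}

theorem measurableSet_smallLeadSet {n : ℕ} (j : Fin (n + 1)) (a d : ℝ) :
    MeasurableSet (smallLeadSet j a d) := by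
  have hmax : Measurable fun ω : Fin (n + 1) → ℝ => ⨆ l, j.removeNth ω l :=
    Measurable.iSup fun l => measurable_pi_apply _
  refine (MeasurableSet.univ_pi fun _ => measurableSet_Iic).preimage ?_ |>.inter ?_
  · exact measurable_pi_lambda _ fun l => measurable_pi_apply _
  · exact (measurableSet_le hmax (measurable_pi_apply j)).inter
      (measurableSet_le (measurable_pi_apply j) (hmax.add_const d))

theorem measure_smallLeadSet_le {n : ℕ} (π : Measure ℝ) [SigmaFinite π] {d : ℝ} {c : ℝ≥0∞}
    (hIcc : ∀ x, π (Icc x (x + d)) ≤ c) (j : Fin (n + 1)) (a : ℝ) :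
    Measure.pi (fun _ => π) (smallLeadSet j a d) ≤ c * π (Iic a) ^ n := by
  have hbox := MeasurableSet.univ_pi fun _ : Fin n => measurableSet_Iic (a := a)
  calc Measure.pi (fun _ => π) (smallLeadSet j a d)
      ≤ c * Measure.pi (fun _ => π) (univ.pi fun _ => Iic a) := by
        refine Measure.pi_le_mul_of_section_le π j (measurableSet_smallLeadSet j a d) hbox c
          fun r => ?_
        by_cases hr : r ∈ univ.pi fun _ => Iic a
        · simp only [smallLeadSet, mem_ofPred_eq, Fin.removeNth_insertNth,
            Fin.insertNth_apply_same, hr, true_and, ofPred_mem_eq, indicator_of_mem hr]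
          exact hIcc _
        · simp only [smallLeadSet, mem_ofPred_eq, Fin.removeNth_insertNth, hr, false_and,
            ofPred_false, measure_empty, zero_le]
    _ = c * π (Iic a) ^ n := by
        rw [Measure.pi_pi, Finset.prod_const, Finset.card_univ, Fintype.card_fin]

theorem largestVal_eq_of_forall_le {K : ℕ} {ω : Fin K → ℝ} {j : Fin K} (hj : ∀ k, ω k ≤ ω j) :
    largestVal ω = ω j :=
  have : Nonempty (Fin K) := ⟨j⟩
  le_antisymm (ciSup_le hj) (le_ciSup (Finite.bddAbove_range ω) j)

theorem secondLargestVal_le_iSup_removeNth {n : ℕ} (ω : Fin (n + 2) → ℝ) (j : Fin (n + 2)) :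
    secondLargestVal ω ≤ ⨆ l, j.removeNth ω l := by
  have : Nonempty {k : Fin (n + 2) // k ≠ j} := ⟨⟨j.succAbove 0, j.succAbove_ne 0⟩⟩
  refine (ciInf_le (Finite.bddBelow_range _) j).trans (ciSup_le fun k => ?_)
  obtain ⟨l, hl⟩ := Fin.exists_succAbove_eq k.2
  rw [← hl]
  exact le_ciSup (Finite.bddAbove_range (j.removeNth ω)) l

theorem setOf_gap_le_subset {n : ℕ} (a d : ℝ) :
    {ω : Fin (n + 2) → ℝ | largestVal ω - secondLargestVal ω ≤ d} ⊆
      (⋃ j, smallLeadSet j a d) ∪ (atMostOneIn (Ioi a))ᶜ := by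
  intro ω hω
  obtain ⟨j, hj⟩ := Finite.exists_max ω
  set M := ⨆ l, j.removeNth ω l
  have hle : ∀ l, j.removeNth ω l ≤ M := le_ciSup (Finite.bddAbove_range _)
  have hgap : ω j ≤ M + d := by
    have := secondLargestVal_le_iSup_removeNth ω j
    rw [mem_ofPred_eq, largestVal_eq_of_forall_le hj] at hω
    linarith
  by_cases hM : M ≤ a
  · exact Or.inl (mem_iUnion.2
      ⟨j, fun l _ => (hle l).trans hM, ciSup_le fun l => hj _, hgap⟩)
  · obtain ⟨l, hl⟩ := exists_lt_of_lt_ciSup (not_le.1 hM)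
    exact Or.inr fun hone => j.succAbove_ne l (hone _ _ hl (hl.trans_le (hj _)))

theorem measureReal_gap_le_of_measure_Icc_le {n : ℕ} (π : Measure ℝ) [IsProbabilityMeasure π]
    {c d : ℝ} (hc : 0 ≤ c) (hIcc : ∀ x, π (Icc x (x + d)) ≤ ENNReal.ofReal c) (a : ℝ) :
    (Measure.pi fun _ : Fin (n + 2) => π).real {ω | largestVal ω - secondLargestVal ω ≤ d} ≤
      (n + 2) * (c * π.real (Iic a) ^ (n + 1)) +
        (1 - (π.real (Iic a) ^ (n + 2) +
          (n + 2) * ((1 - π.real (Iic a)) * π.real (Iic a) ^ (n + 1)))) := by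
  set μ := Measure.pi fun _ : Fin (n + 2) => π
  set p := π.real (Iic a)
  have hlead : ∀ j, μ.real (smallLeadSet j a d) ≤ c * p ^ (n + 1) := fun j => by
    have h := ENNReal.toReal_mono (by finiteness) (measure_smallLeadSet_le π hIcc j a)
    simpa [μ, p, measureReal_def, ENNReal.toReal_mul, ENNReal.toReal_ofReal hc] using h
  have htail : μ.real (atMostOneIn (Ioi a))ᶜ =
      1 - (p ^ (n + 2) + (n + 2) * ((1 - p) * p ^ (n + 1))) := by
    rw [probReal_compl_eq_one_sub (measurableSet_atMostOneIn measurableSet_Ioi),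
      measureReal_pi_atMostOneIn π measurableSet_Ioi, compl_Ioi,
      ← compl_Iic, probReal_compl_eq_one_sub measurableSet_Iic]
    simp [p]
  calc μ.real {ω | largestVal ω - secondLargestVal ω ≤ d}
      ≤ μ.real ((⋃ j, smallLeadSet j a d) ∪ (atMostOneIn (Ioi a))ᶜ) :=
        measureReal_mono (setOf_gap_le_subset a d)
    _ ≤ ∑ j, μ.real (smallLeadSet j a d) + μ.real (atMostOneIn (Ioi a))ᶜ :=
        (measureReal_union_le _ _).trans (by gcongr; exact measureReal_iUnion_fintype_le _)
    _ ≤ (n + 2) * (c * p ^ (n + 1)) + (1 - (p ^ (n + 2) + (n + 2) * ((1 - p) * p ^ (n + 1)))) := by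
        rw [htail]
        gcongr
        convert Finset.sum_le_card_nsmul Finset.univ _ _ fun j _ => hlead j using 1
        simp only [Finset.card_univ, Fintype.card_fin, nsmul_eq_mul]
        push_cast
        ring

theorem le_of_gap_union_bound {P p β d k : ℝ} {m : ℕ} (hp0 : 0 ≤ p) (hp1 : p ≤ 1) (hk : 1 ≤ k)
    (hP1 : P ≤ 1)
    (hP : P ≤ k * (β * d * p ^ m) + (1 - (p ^ (m + 1) + k * ((1 - p) * p ^ m)))) :
    P ≤ 1 - (1 - β * k * d) * p ^ (m + 1) := by
  by_cases hβd : β * d ≤ 1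
  · have hslack : 0 ≤ k * p ^ m * (1 - p) * (1 - β * d) :=
      mul_nonneg (mul_nonneg (mul_nonneg (by linarith) (pow_nonneg hp0 m)) (sub_nonneg.2 hp1))
        (sub_nonneg.2 hβd)
    linarith [show k * (β * d * p ^ m) + (1 - (p ^ (m + 1) + k * ((1 - p) * p ^ m))) =
      1 - (1 - β * k * d) * p ^ (m + 1) - k * p ^ m * (1 - p) * (1 - β * d) by ring]
  · have hneg : 1 - β * k * d ≤ 0 := by nlinarith
    nlinarith [pow_nonneg hp0 (m + 1)]

theorem gap_probability_bound_general (K : ℕ) (hK : 2 ≤ K)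
    (π : Measure ℝ) [IsProbabilityMeasure π] (F : ℝ → ℝ) (β : ℝ) (hβ : 0 ≤ β)
    (hF : ∀ x, F x = (π (Set.Iic x)).toReal)
    (hLip : ∀ u : ℝ, ∀ d : ℝ, 0 < d → F (u + d) - F u ≤ β * d)
    (d : ℝ) (hd : 0 < d) :
    ((Measure.pi fun _ : Fin K => π)
        {ω | largestVal ω - secondLargestVal ω ≤ d}).toReal ≤
      1 - (1 - β * K * d) * F (1 - d) ^ K := by
  obtain ⟨n, rfl⟩ : ∃ n, K = n + 2 := ⟨K - 2, by omega⟩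
  obtain rfl : F = cdf π := funext fun x => (hF x).trans (cdf_eq_real π x).symm
  have hP := measureReal_gap_le_of_measure_Icc_le (n := n) π (mul_nonneg hβ hd.le)
    (measure_Icc_le_of_cdf_sub_le π hLip hd.le) (1 - d)
  rw [← cdf_eq_real] at hP
  exact le_of_gap_union_bound (cdf_nonneg π _) (cdf_le_one π _) (by push_cast; linarith)
    measureReal_le_one (by push_cast; exact hP)

/-- If the CDF F of the i.i.d. samples on [0,1] is β-Lipschitz, then the gap
Δ₂ = V - U between the largest and second largest satisfies
P(V - U ≤ d) ≤ 1 - (1 - βKd) F^K(1-d). -/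
theorem gap_probability_bound (K : ℕ) (hK : 2 ≤ K)
    (π : Measure ℝ) [IsProbabilityMeasure π] (F : ℝ → ℝ) (β : ℝ) (hβ : 0 ≤ β)
    (hF : ∀ x, F x = (π (Set.Iic x)).toReal)
    (hLip : ∀ u : ℝ, ∀ d : ℝ, 0 < d → F (u + d) - F u ≤ β * d)
    (hsupp : π (Set.Icc (0:ℝ) 1) = 1)
    (d : ℝ) (hd : 0 < d) :
    ((Measure.pi fun _ : Fin K => π)
        {ω | largestVal ω - secondLargestVal ω ≤ d}).toReal ≤
      1 - (1 - β * K * d) * F (1 - d) ^ K :=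
  gap_probability_bound_general K hK π F β hβ hF hLip d hd
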